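/- For every positive integer n, ∑_{π ∈ 𝔖_n} (−1)^{inv(π)} q^{depth(π)} = (1 − q)^{n−1} as polynomials in q over the integers. -/

import Mathlib

open Finset

/-- The one-line notation value of `π` at position `k ∈ {1,…,n}`:
`oneLine π k = π(k)` with `1`-indexed positions and values. -/
def oneLine {n : ℕ} (π : Equiv.Perm (Fin n)) (k : ℕ) : ℕ :=
  if h : k - 1 < n then ((π ⟨k - 1, h⟩ : Fin n) : ℕ) + 1 else k

/-- `SUC(π) = {i ∈ {1,…,n-1} : π(i+1) = π(i)+1}` (position set). -/
def SUC {n : ℕ} (π : Equiv.Perm (Fin n)) : Finset ℕ :=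
  (Finset.Icc 1 (n - 1)).filter (fun i => oneLine π (i + 1) = oneLine π i + 1)

/-- `FIX(π) = {i ∈ {1,…,n-1} : π(i) = i}` (position set). -/
def FIX {n : ℕ} (π : Equiv.Perm (Fin n)) : Finset ℕ :=
  (Finset.Icc 1 (n - 1)).filter (fun i => oneLine π i = i)

/-- `Asc₂(π) = {π(i+1) : i ∈ {1,…,n-1}, π(i+1) ≥ π(i)+2}` (value set). -/
def Asc2 {n : ℕ} (π : Equiv.Perm (Fin n)) : Finset ℕ :=
  ((Finset.Icc 1 (n - 1)).filter (fun i => oneLine π i + 2 ≤ oneLine π (i + 1))).image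
    (fun i => oneLine π (i + 1))

/-- `Des(π) = {π(i+1) : i ∈ {1,…,n-1}, π(i) > π(i+1)}` (value set). -/
def DesSet {n : ℕ} (π : Equiv.Perm (Fin n)) : Finset ℕ :=
  ((Finset.Icc 1 (n - 1)).filter (fun i => oneLine π (i + 1) < oneLine π i)).image
    (fun i => oneLine π (i + 1))

/-- `Suc(π) = {π(i+1) : i ∈ {1,…,n-1}, π(i+1) = π(i)+1}` (value set). -/
def SucSet {n : ℕ} (π : Equiv.Perm (Fin n)) : Finset ℕ :=
  ((Finset.Icc 1 (n - 1)).filter (fun i => oneLine π (i + 1) = oneLine π i + 1)).image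
    (fun i => oneLine π (i + 1))

/-- `Aexc(π) = {π(i) : i ∈ {2,…,n}, π(i) < i}` (value set). -/
def Aexc {n : ℕ} (π : Equiv.Perm (Fin n)) : Finset ℕ :=
  ((Finset.Icc 2 n).filter (fun i => oneLine π i < i)).image (fun i => oneLine π i)

/-- `Êxc(π) = {π(i) : i ∈ {2,…,n}, π(i) > i}` (value set). -/
def ExcHat {n : ℕ} (π : Equiv.Perm (Fin n)) : Finset ℕ :=
  ((Finset.Icc 2 n).filter (fun i => i < oneLine π i)).image (fun i => oneLine π i)

/-- `F̂ix(π) = {π(i) : i ∈ {2,…,n}, π(i) = i}` (value set). -/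
def FixHat {n : ℕ} (π : Equiv.Perm (Fin n)) : Finset ℕ :=
  ((Finset.Icc 2 n).filter (fun i => oneLine π i = i)).image (fun i => oneLine π i)

/-- `depth(π) = ∑_{i : π(i) > i} (π(i) − i)`. -/
def depthStat {n : ℕ} (π : Equiv.Perm (Fin n)) : ℕ :=
  ∑ i ∈ (Finset.Icc 1 n).filter (fun i => i < oneLine π i), (oneLine π i - i)

/-- `drp(π) = ∑_{i ∈ {1,…,n-1} : π(i) > π(i+1)} (π(i) − π(i+1))`. -/
def drpStat {n : ℕ} (π : Equiv.Perm (Fin n)) : ℕ :=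
  ∑ i ∈ (Finset.Icc 1 (n - 1)).filter (fun i => oneLine π (i + 1) < oneLine π i),
    (oneLine π i - oneLine π (i + 1))

/-- `exc(π) = |{i ∈ {1,…,n} : π(i) > i}|`. -/
def excNum {n : ℕ} (π : Equiv.Perm (Fin n)) : ℕ :=
  ((Finset.Icc 1 n).filter (fun i => i < oneLine π i)).card

/-- `nexc(π) = |{i ∈ {1,…,n} : π(i) < i}|`. -/
def nexcNum {n : ℕ} (π : Equiv.Perm (Fin n)) : ℕ :=
  ((Finset.Icc 1 n).filter (fun i => oneLine π i < i)).card

/-- `des(π) = |{i ∈ {1,…,n-1} : π(i) > π(i+1)}|`. -/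
def desNum {n : ℕ} (π : Equiv.Perm (Fin n)) : ℕ :=
  ((Finset.Icc 1 (n - 1)).filter (fun i => oneLine π (i + 1) < oneLine π i)).card

/-- `asc(π) = |{i ∈ {1,…,n-1} : π(i) < π(i+1)}|`. -/
def ascNum {n : ℕ} (π : Equiv.Perm (Fin n)) : ℕ :=
  ((Finset.Icc 1 (n - 1)).filter (fun i => oneLine π i < oneLine π (i + 1))).card

/-- `inv(π) = |{(i,j) : 1 ≤ i < j ≤ n, π(i) > π(j)}|`. -/
def invNum {n : ℕ} (π : Equiv.Perm (Fin n)) : ℕ :=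
  (((Finset.Icc 1 n) ×ˢ (Finset.Icc 1 n)).filter
    (fun p : ℕ × ℕ => p.1 < p.2 ∧ oneLine π p.2 < oneLine π p.1)).card

/-! Since `(-1) ^ inv π` is the sign of `π` and `q ^ depth π = ∏ᵢ q ^ (π(i) - i)₊`, the sum is the
Leibniz expansion of `det (q ^ (i - j)₊)`, the matrix with `1` on and above the diagonal and
`q ^ (i - j)` below it. Subtracting `q` times each row from the next one leaves an upper triangular
matrix with diagonal `1, 1 - q, …, 1 - q`. -/

theorem Matrix.det_of_pow_sub {R : Type*} [CommRing R] (a : R) (n : ℕ) :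
    (Matrix.of fun i j : Fin n => a ^ ((i : ℕ) - j)).det = (1 - a) ^ (n - 1) := by
  rcases n with _ | m
  · simp
  let U : Matrix (Fin (m + 1)) (Fin (m + 1)) R :=
    Matrix.of fun i j => if i = 0 then 1 else if j < i then 0 else 1 - a
  have hU : U.BlockTriangular id := fun i j (hji : j < i) => by
    simp [U, Fin.ne_zero_of_lt hji, hji]
  rw [Nat.add_sub_cancel, Matrix.det_eq_of_forall_row_eq_smul_add_pred (fun _ => a) (B := U),
    Matrix.det_of_isUpperTriangular hU, Fin.prod_univ_succ]
  · simp [U]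
  · simp [U]
  · intro i j
    simp only [U, Matrix.of_apply, Fin.succ_ne_zero, if_false, Fin.lt_def, Fin.val_succ,
      Fin.val_castSucc]
    split_ifs with hji
    · rw [show (i : ℕ) + 1 - j = (i - j : ℕ) + 1 by omega, pow_succ', zero_add]
    · rw [Nat.sub_eq_zero_of_le (by omega), Nat.sub_eq_zero_of_le (by omega)]
      ring

theorem Equiv.Perm.sign_eq_neg_one_pow_card_inversions {n : ℕ} (σ : Equiv.Perm (Fin n)) :
    (σ.sign : ℤ) = (-1) ^ #{p : Fin n × Fin n | p.1 < p.2 ∧ σ p.2 < σ p.1} := by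
  rw [sign_eq_prod_prod_Ioi, Units.coe_prod, ← Finset.prod_const, Finset.prod_filter,
    Fintype.prod_prod_type]
  refine Finset.prod_congr rfl fun i _ => ?_
  rw [Units.coe_prod, ← Finset.filter_lt_eq_Ioi, Finset.prod_filter]
  refine Finset.prod_congr rfl fun j _ => ?_
  by_cases hij : i < j
  · rcases lt_or_gt_of_ne (σ.injective.ne hij.ne) with h | h <;>
      simp [hij, h, h.not_gt]
  · simp [hij]

theorem Finset.Icc_one_eq_map_univ (n : ℕ) :
    Icc 1 n = (univ : Finset (Fin n)).map (Fin.valEmbedding.trans (addRightEmbedding 1)) := by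
  ext i
  simp only [mem_Icc, mem_map, mem_univ, true_and, Function.Embedding.trans_apply,
    Fin.valEmbedding_apply, addRightEmbedding_apply]
  constructor
  · exact fun h => ⟨⟨i - 1, by omega⟩, by simp only; omega⟩
  · rintro ⟨k, rfl⟩
    omega

theorem oneLine_val_add_one {n : ℕ} (π : Equiv.Perm (Fin n)) (k : Fin n) :
    oneLine π (k + 1) = π k + 1 := by
  simp [oneLine]

theorem invNum_eq_card_inversions {n : ℕ} (π : Equiv.Perm (Fin n)) :
    invNum π = #{p : Fin n × Fin n | p.1 < p.2 ∧ π p.2 < π p.1} := by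
  rw [invNum, Icc_one_eq_map_univ, ← prodMap_map_product, filter_map, card_map, univ_product_univ]
  congr 1
  ext p
  rw [mem_filter, mem_filter]
  simp only [mem_univ, true_and, Function.comp_apply, Function.Embedding.coe_prodMap,
    Prod.map_fst, Prod.map_snd, Function.Embedding.trans_apply, Fin.valEmbedding_apply,
    addRightEmbedding_apply, oneLine_val_add_one, add_lt_add_iff_right, Fin.lt_def]

theorem depthStat_eq_sum {n : ℕ} (π : Equiv.Perm (Fin n)) :
    depthStat π = ∑ k, ((π k : ℕ) - k) := by
  rw [depthStat, sum_filter_of_ne fun i _ h => by omega, Icc_one_eq_map_univ, sum_map]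
  simp [oneLine_val_add_one]

theorem stmt7_general (n : ℕ) :
    (∑ π : Equiv.Perm (Fin n),
        (-1 : Polynomial ℤ) ^ invNum π * Polynomial.X ^ depthStat π) =
      (1 - Polynomial.X : Polynomial ℤ) ^ (n - 1) := by
  rw [← Matrix.det_of_pow_sub, Matrix.det_apply]
  refine Finset.sum_congr rfl fun π _ => ?_
  simp only [Matrix.of_apply, prod_pow_eq_pow_sum, ← depthStat_eq_sum, Units.smul_def,
    zsmul_eq_mul, Equiv.Perm.sign_eq_neg_one_pow_card_inversions, invNum_eq_card_inversions]
  push_cast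
  rfl

/-- ∑ (−1)^{inv(π)} q^{depth(π)} = (1 − q)^{n−1}. -/
theorem stmt7 (n : ℕ) (hn : 0 < n) :
    (∑ π : Equiv.Perm (Fin n),
        (-1 : Polynomial ℤ) ^ invNum π * Polynomial.X ^ depthStat π) =
      (1 - Polynomial.X : Polynomial ℤ) ^ (n - 1) :=
  stmt7_general n
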